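/- arXiv:1111.1651 — 4 statements merged into one kernel-verified Lean document; each statement's English description precedes it below -/
import Mathlib

section
/- Let T be an imprecise terrain and let R1,...,Rk be realizations with designated nodes q1,...,qk. Let R̄ be the watershed-overlay of WS(R1,q1),...,WS(Rk,qk), i.e., the realization in which every node v has elevation min over all i with v ∈ WS(Ri,qi) of elev(Ri,v), and elevation high(v) if v is in none of these watersheds. Then for every i, WS(Ri,qi) ⊆ WS(R̄, Q), where Q = {q1,...,qk}. -/
open scoped Classical
open Set

/-- An imprecise terrain: a finite geometric graph with nodes in the plane,
each node carrying an elevation interval `[low v, high v]`. -/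
structure ImpTerrain (V : Type) [Fintype V] [DecidableEq V] where
  pos : V → ℝ × ℝ
  posInj : Function.Injective pos
  adj : V → V → Prop
  adj_symm : ∀ u v, adj u v → adj v u
  adj_irrefl : ∀ v, ¬ adj v v
  low : V → ℝ
  high : V → ℝ

namespace ImpTerrain

variable {V : Type} [Fintype V] [DecidableEq V]

/-- A realization assigns to each node an elevation within its interval. -/
def IsRealization (T : ImpTerrain V) (R : V → ℝ) : Prop :=
  ∀ v, T.low v ≤ R v ∧ R v ≤ T.high v

/-- Horizontal (plane) distance between two nodes. -/
noncomputable def hdist (T : ImpTerrain V) (u v : V) : ℝ := dist (T.pos u) (T.pos v)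

/-- Slope (steepness of descent) of the edge from `p` to `q` in realization `R`. -/
noncomputable def slope (T : ImpTerrain V) (R : V → ℝ) (p q : V) : ℝ :=
  (R p - R q) / T.hdist p q

/-- `q` is a steepest-descent neighbor of `p` in `R`. -/
def SDN (T : ImpTerrain V) (R : V → ℝ) (p q : V) : Prop :=
  T.adj p q ∧ 0 ≤ T.slope R p q ∧ ∀ r, T.adj p r → T.slope R p r ≤ T.slope R p q

/-- The neighborhood of a set of nodes. -/
def Nbhd (T : ImpTerrain V) (P : Set V) : Set V :=
  {s | s ∉ P ∧ ∃ t ∈ P, T.adj s t}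

/-- `u` and `v` are connected by a path staying inside `P`. -/
def ConnIn (T : ImpTerrain V) (P : Set V) (u v : V) : Prop :=
  Relation.ReflTransGen (fun a b => T.adj a b ∧ a ∈ P ∧ b ∈ P) u v

/-- `P` is a local minimum in realization `R`: nonempty, connected, all nodes at
the same elevation, strictly below its neighborhood. -/
def LocalMin (T : ImpTerrain V) (R : V → ℝ) (P : Set V) : Prop :=
  P.Nonempty ∧ (∀ u ∈ P, ∀ v ∈ P, T.ConnIn P u v) ∧
    (∀ u ∈ P, ∀ v ∈ P, R u = R v) ∧ (∀ u ∈ P, ∀ t ∈ T.Nbhd P, R u < R t)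

def InLocalMin (T : ImpTerrain V) (R : V → ℝ) (p : V) : Prop :=
  ∃ P, T.LocalMin R P ∧ p ∈ P

/-- One step of discrete water flow. -/
def FlowStep (T : ImpTerrain V) (R : V → ℝ) (p q : V) : Prop :=
  (∃ P, T.LocalMin R P ∧ p ∈ P ∧ q ∈ P ∧ T.adj p q) ∨
    (¬ T.InLocalMin R p ∧ T.SDN R p q)

/-- `p ⇝_R q` : water from `p` reaches `q` in realization `R`. -/
def FlowsTo (T : ImpTerrain V) (R : V → ℝ) : V → V → Prop :=
  Relation.ReflTransGen (T.FlowStep R)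

/-- The (discrete) watershed of a set of nodes `Q` in realization `R`. -/
def WS (T : ImpTerrain V) (R : V → ℝ) (Q : Set V) : Set V :=
  {p | ∃ q ∈ Q, T.FlowsTo R p q}

/-- The potential watershed of `Q`. -/
def PoWS (T : ImpTerrain V) (Q : Set V) : Set V :=
  {p | ∃ R, T.IsRealization R ∧ p ∈ T.WS R Q}

/-- A flow path: a simple path following steepest-descent edges that ends in,
and visits all nodes of, a local minimum. -/
def IsFlowPath (T : ImpTerrain V) (R : V → ℝ) (L : List V) : Prop :=
  L.Nodup ∧ L.Chain' (fun p q => T.SDN R p q) ∧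
    ∃ P, T.LocalMin R P ∧ (∀ v ∈ P, v ∈ L) ∧ ∃ hne : L ≠ [], L.getLast hne ∈ P

/-- The `Q`-avoiding potential watershed of `S`: nodes having, in some
realization, a flow path to a node of `S` whose portion up to that node
avoids `Q`. -/
def AvWS (T : ImpTerrain V) (Q S : Set V) : Set V :=
  {p | ∃ R, T.IsRealization R ∧ ∃ L, T.IsFlowPath R L ∧ ∃ s ∈ S,
    ∃ i j : Fin L.length, (i : ℕ) ≤ (j : ℕ) ∧ L.get i = p ∧ L.get j = s ∧
      ∀ k : Fin L.length, (i : ℕ) ≤ (k : ℕ) → (k : ℕ) ≤ (j : ℕ) → L.get k ∉ Q}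

/-- The persistent watershed of `Q`. -/
def PsWS (T : ImpTerrain V) (Q : Set V) : Set V :=
  (T.AvWS Q (T.PoWS Q)ᶜ)ᶜ

/-- The core watershed of `Q`: nodes from which every induced flow path leads
to a node of `Q`. -/
def CoWS (T : ImpTerrain V) (Q : Set V) : Set V :=
  {p | ∀ R, T.IsRealization R → ∀ L, T.IsFlowPath R L →
    ∀ i : Fin L.length, L.get i = p →
      ∃ q ∈ Q, ∃ j : Fin L.length, (i : ℕ) ≤ (j : ℕ) ∧ L.get j = q}

/-- Union of all node sets disjoint from `Q` that form a local minimum in some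
realization. -/
def Vmin (T : ImpTerrain V) (Q : Set V) : Set V :=
  ⋃₀ {r | r ∩ Q = ∅ ∧ ∃ R, T.IsRealization R ∧ T.LocalMin R r}

/-- `S` contains a local minimum in every realization. -/
def AlwaysMin (T : ImpTerrain V) (S : Set V) : Prop :=
  ∀ R, T.IsRealization R → ∃ P, T.LocalMin R P ∧ P ⊆ S

/-- An imprecise minimum: a minimal set containing a local minimum in every
realization. -/
def ImpreciseMin (T : ImpTerrain V) (S : Set V) : Prop :=
  T.AlwaysMin S ∧ ∀ S', S' ⊂ S → ¬ T.AlwaysMin S'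

/-- A terrain is regular if every local minimum of the lowermost realization is
an imprecise minimum. -/
def Regular (T : ImpTerrain V) : Prop :=
  ∀ P, T.LocalMin T.low P → T.ImpreciseMin P

/-- A proxy of `S`: a node of `S` from which water can never reach a node
outside `S` in any realization. -/
def IsProxy (T : ImpTerrain V) (S : Set V) (p : V) : Prop :=
  p ∈ S ∧ ∀ R, T.IsRealization R → ∀ q, q ∉ S → ¬ T.FlowsTo R p q

/-- `R'` is an `ε`-perturbation of `R`. -/
def Perturb (ε : ℝ) (R R' : V → ℝ) : Prop := ∀ v, |R' v - R v| ≤ ε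

/-- `S` together with all `ε`-perturbations of its members (`S^ε`). -/
def Enlarge (S : Set (V → ℝ)) (ε : ℝ) : Set (V → ℝ) :=
  S ∪ {R' | ∃ R ∈ S, Perturb ε R R'}

/-- `Π(S)` : flow paths induced by realizations in `S`. -/
def FlowPathsOf (T : ImpTerrain V) (S : Set (V → ℝ)) : Set (List V) :=
  {L | ∃ R ∈ S, T.IsFlowPath R L}

/-- A flow path is stable with respect to `S`. -/
def StableWrt (T : ImpTerrain V) (S : Set (V → ℝ)) (L : List V) : Prop :=
  ∃ ε > (0 : ℝ), ∃ R ∈ S, ∀ R', Perturb ε R R' → T.IsFlowPath R' L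

/-- State of the sweep-plane minimum-removal algorithm. -/
structure SweepState (V : Type) where
  discovered : Set V
  final : V → Option ℝ
  proxies : Set V

def pendingS (st : SweepState V) (v : V) : Prop :=
  v ∈ st.discovered ∧ st.final v = none

/-- Pending component of `v`. -/
def pendComp (T : ImpTerrain V) (st : SweepState V) (v : V) : Set V :=
  {u | Relation.ReflTransGen (fun a b => T.adj a b ∧ pendingS st a ∧ pendingS st b) v u}

/-- One step of the sweep algorithm, processing a `low` event `(v, false)` or a
`high` event `(v, true)`. -/
noncomputable def sweepStep (T : ImpTerrain V) (st : SweepState V) : V × Bool → SweepState V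
  | (v, false) =>
    let st1 : SweepState V := ⟨insert v st.discovered, st.final, st.proxies⟩
    if ∃ u, T.adj v u ∧ (st.final u).isSome = true then
      ⟨st1.discovered,
        fun w => if w ∈ T.pendComp st1 v then some (T.low v) else st.final w,
        st.proxies⟩
    else st1
  | (v, true) =>
    if (st.final v).isSome = true then st
    else
      ⟨st.discovered,
        fun w =>
          if w ∈ T.pendComp st v then some (sSup (T.low '' T.pendComp st v))
          else st.final w,
        insert v st.proxies⟩

noncomputable def sweepRun (T : ImpTerrain V) (evs : List (V × Bool)) : SweepState V :=
  evs.foldl T.sweepStep ⟨∅, fun _ => none, ∅⟩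

/-- Elevation key of an event. -/
def eKey (T : ImpTerrain V) : V × Bool → ℝ
  | (v, false) => T.low v
  | (v, true) => T.high v

/-- A valid event list: all events, each once, sorted by elevation with low
events before high events at equal elevation. -/
def ValidEventList (T : ImpTerrain V) (evs : List (V × Bool)) : Prop :=
  (∀ v : V, ∀ b : Bool, (v, b) ∈ evs) ∧ evs.Nodup ∧
    evs.Pairwise (fun e1 e2 =>
      T.eKey e1 < T.eKey e2 ∨ (T.eKey e1 = T.eKey e2 ∧ ¬(e1.2 = true ∧ e2.2 = false)))

/-- The realization `M` computed by the sweep algorithm. -/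
noncomputable def sweepM (T : ImpTerrain V) (evs : List (V × Bool)) : V → ℝ :=
  fun v => ((T.sweepRun evs).final v).getD (T.high v)

end ImpTerrain

/-!
Every node `p` of some `WS(Rᵢ, qᵢ)` lies in a watershed `WS(Rⱼ, qⱼ)` with `R̄ p = Rⱼ p`.
Follow the `Rⱼ`-flow from `p` towards `qⱼ`, by induction on `R̄ p` and then along that flow.
Since `R̄ ≤ Rⱼ` on `WS(Rⱼ, qⱼ)` and `R̄ ≥ Rⱼ` outside all watersheds, at each node either
`R̄` has a strictly lower steepest-descent neighbour inside some watershed (and induction on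
the elevation applies), or the next `Rⱼ`-step is also an `R̄`-step at the same elevation, or `p`
lies in a local minimum of `R̄` which must then contain `qⱼ`.
-/

namespace ImpTerrain

variable {V : Type} [Fintype V] [DecidableEq V] (T : ImpTerrain V)

theorem hdist_pos {u v : V} (h : T.adj u v) : 0 < T.hdist u v := by
  rw [hdist, dist_pos]
  rintro he
  exact T.adj_irrefl u (T.posInj he ▸ h)

theorem slope_nonneg_iff {R : V → ℝ} {p q : V} (h : T.adj p q) :
    0 ≤ T.slope R p q ↔ R q ≤ R p := by
  rw [slope, le_div_iff₀ (T.hdist_pos h), zero_mul, sub_nonneg]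

theorem slope_pos_iff {R : V → ℝ} {p q : V} (h : T.adj p q) :
    0 < T.slope R p q ↔ R q < R p := by
  rw [slope, lt_div_iff₀ (T.hdist_pos h), zero_mul, sub_pos]

theorem slope_le_slope {F G : V → ℝ} {p q : V} (h : T.adj p q)
    (hFG : F p - F q ≤ G p - G q) : T.slope F p q ≤ T.slope G p q :=
  div_le_div_of_nonneg_right hFG (T.hdist_pos h).le

variable {T}

theorem FlowStep.adj {F : V → ℝ} {a b : V} (h : T.FlowStep F a b) : T.adj a b := by
  rcases h with ⟨_, _, _, _, hadj⟩ | ⟨_, hadj, _, _⟩ <;> exact hadj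

theorem FlowStep.le {F : V → ℝ} {a b : V} (h : T.FlowStep F a b) : F b ≤ F a := by
  rcases h with ⟨P, hP, haP, hbP, _⟩ | ⟨_, hadj, hs, _⟩
  · exact (hP.2.2.1 b hbP a haP).le
  · exact (T.slope_nonneg_iff hadj).1 hs

/-- No node of a local minimum has a strictly lower neighbour. -/
theorem FlowStep.sdn_of_adj_lt {F : V → ℝ} {p p' w : V} (h : T.FlowStep F p p')
    (hw : T.adj p w) (hlt : F w < F p) : T.SDN F p p' := by
  rcases h with ⟨P, hP, hpP, -, -⟩ | ⟨-, hsdn⟩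
  · by_cases hwP : w ∈ P
    · exact absurd (hP.2.2.1 w hwP p hpP) hlt.ne
    · exact absurd (hP.2.2.2 p hpP w ⟨hwP, p, hpP, T.adj_symm _ _ hw⟩) hlt.not_gt
  · exact hsdn

theorem LocalMin.flowsTo {F : V → ℝ} {P : Set V} (hP : T.LocalMin F P) {a b : V}
    (ha : a ∈ P) (hb : b ∈ P) : T.FlowsTo F a b :=
  Relation.ReflTransGen.mono (fun _ _ h => Or.inl ⟨P, hP, h.2.1, h.2.2, h.1⟩) _ _
    (hP.2.1 a ha b hb)

theorem LocalMin.mem_of_flowsTo {F G : V → ℝ} {P : Set V} (hP : T.LocalMin G P) {p z : V}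
    (hpP : p ∈ P) (hp : G p = F p) (hflow : T.FlowsTo F p z)
    (hle : ∀ v, T.FlowsTo F v z → G v ≤ F v) : z ∈ P := by
  induction hflow using Relation.ReflTransGen.head_induction_on with
  | refl => exact hpP
  | @head a c hstep hcz ih =>
    have hGc : G c ≤ F c := hle c hcz
    have hcP : c ∈ P := by
      by_contra hcP
      have := hP.2.2.2 a hpP c ⟨hcP, a, hpP, T.adj_symm _ _ hstep.adj⟩
      linarith [hstep.le]
    exact ih hcP (by linarith [hP.2.2.1 c hcP a hpP, hstep.le])

variable (T)

theorem exists_sdn_lt_of_adj_lt {F : V → ℝ} {p r : V} (hr : T.adj p r) (hlt : F r < F p) :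
    ∃ w, T.SDN F p w ∧ F w < F p := by
  obtain ⟨w, hw, hwmax⟩ := ({s | T.adj p s} : Finset V).exists_max_image (T.slope F p)
    ⟨r, by simpa using hr⟩
  have hadj : T.adj p w := by simpa using hw
  have hmax : ∀ s, T.adj p s → T.slope F p s ≤ T.slope F p w := fun s hs =>
    hwmax s (by simpa using hs)
  have hpos : 0 < T.slope F p w := ((T.slope_pos_iff hr).2 hlt).trans_le (hmax r hr)
  exact ⟨w, ⟨hadj, hpos.le, hmax⟩, (T.slope_pos_iff hadj).1 hpos⟩

theorem sdn_of_forall_le {F : V → ℝ} {p p' : V} (hadj : T.adj p p') (heq : F p' = F p)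
    (hmin : ∀ s, T.adj p s → F p ≤ F s) : T.SDN F p p' := by
  have hzero : T.slope F p p' = 0 := by rw [slope, heq, sub_self, zero_div]
  refine ⟨hadj, hzero.ge, fun s hs => hzero ▸ ?_⟩
  exact div_nonpos_of_nonpos_of_nonneg (by linarith [hmin s hs]) (T.hdist_pos hs).le

theorem flowStep_or_exists_flowStep_lt {F G : V → ℝ} {S : Set V} {p p' : V}
    (hstep : T.FlowStep G p p') (hp : F p = G p) (hp' : F p' ≤ G p') (hp'S : p' ∈ S)
    (hoff : ∀ w ∉ S, G w ≤ F w) (hnot : ¬ T.InLocalMin F p) :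
    (T.FlowStep F p p' ∧ F p' = F p ∧ F p' = G p') ∨
      ∃ w ∈ S, T.FlowStep F p w ∧ F w < F p := by
  have hGle := hstep.le
  by_cases hflat : ∀ s, T.adj p s → F p ≤ F s
  · have heq : F p' = F p := le_antisymm (by linarith) (hflat p' hstep.adj)
    exact Or.inl ⟨Or.inr ⟨hnot, T.sdn_of_forall_le hstep.adj heq hflat⟩, heq, by linarith⟩
  push Not at hflat
  obtain ⟨r, hr, hrlt⟩ := hflat
  obtain ⟨w, hw, hwlt⟩ := T.exists_sdn_lt_of_adj_lt hr hrlt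
  by_cases hwS : w ∈ S
  · exact Or.inr ⟨w, hwS, Or.inr ⟨hnot, hw⟩, hwlt⟩
  have hGw : G w < G p := by linarith [hoff w hwS]
  have hGsdn := hstep.sdn_of_adj_lt hw.1 hGw
  have hslope : T.slope F p w ≤ T.slope F p p' :=
    calc T.slope F p w ≤ T.slope G p w := T.slope_le_slope hw.1 (by linarith [hoff w hwS])
      _ ≤ T.slope G p p' := hGsdn.2.2 w hw.1
      _ ≤ T.slope F p p' := T.slope_le_slope hstep.adj (by linarith)
  have hsdn : T.SDN F p p' :=
    ⟨hstep.adj, hw.2.1.trans hslope, fun s hs => (hw.2.2 s hs).trans hslope⟩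
  have hlt : F p' < F p :=
    (T.slope_pos_iff hstep.adj).1 (((T.slope_pos_iff hw.1).2 hwlt).trans_le hslope)
  exact Or.inr ⟨p', hp'S, Or.inr ⟨hnot, hsdn⟩, hlt⟩

section Overlay

variable {ι : Type} {R : ι → V → ℝ} {q : ι → V} {F : V → ℝ}

theorem exists_flowsTo_of_flowsTo (hle : ∀ i, ∀ v ∈ T.WS (R i) {q i}, F v ≤ R i v)
    (hoff : ∀ i, ∀ v ∉ ⋃ i, T.WS (R i) {q i}, R i v ≤ F v) {j : ι} {e : ℝ}
    (hlower : ∀ w ∈ ⋃ i, T.WS (R i) {q i}, F w < e → ∃ m, T.FlowsTo F w (q m))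
    {p : V} (hp : T.FlowsTo (R j) p (q j)) (hpR : F p = R j p) (hpe : F p = e) :
    ∃ m, T.FlowsTo F p (q m) := by
  induction hp using Relation.ReflTransGen.head_induction_on with
  | refl => exact ⟨j, .refl⟩
  | @head a b hstep hb ih =>
    have hbWS : b ∈ T.WS (R j) {q j} := ⟨q j, rfl, hb⟩
    by_cases hloc : T.InLocalMin F a
    · obtain ⟨P, hP, haP⟩ := hloc
      have hqP : q j ∈ P :=
        hP.mem_of_flowsTo haP hpR (.head hstep hb) fun v hv => hle j v ⟨q j, rfl, hv⟩
      exact ⟨j, hP.flowsTo haP hqP⟩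
    rcases T.flowStep_or_exists_flowStep_lt hstep hpR (hle j b hbWS) (mem_iUnion.2 ⟨j, hbWS⟩)
      (hoff j) hloc with ⟨hF, hbF, hbR⟩ | ⟨w, hwW, hF, hwlt⟩
    · obtain ⟨m, hm⟩ := ih hbR (hbF.trans hpe)
      exact ⟨m, .head hF hm⟩
    · obtain ⟨m, hm⟩ := hlower w hwW (hpe ▸ hwlt)
      exact ⟨m, .head hF hm⟩

theorem exists_flowsTo_of_mem_iUnion (hle : ∀ i, ∀ v ∈ T.WS (R i) {q i}, F v ≤ R i v)
    (hoff : ∀ i, ∀ v ∉ ⋃ i, T.WS (R i) {q i}, R i v ≤ F v)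
    (hattain : ∀ v ∈ ⋃ i, T.WS (R i) {q i}, ∃ j, v ∈ T.WS (R j) {q j} ∧ F v = R j v)
    {p : V} (hp : p ∈ ⋃ i, T.WS (R i) {q i}) : ∃ m, T.FlowsTo F p (q m) := by
  induction p using (Finite.wellFounded_of_trans_of_irrefl fun a b : V => F a < F b).induction
  with | _ p ih =>
  obtain ⟨j, ⟨_, rfl, hpj⟩, hpR⟩ := hattain p hp
  exact T.exists_flowsTo_of_flowsTo hle hoff (fun w hw hwlt => ih w hwlt hw) hpj hpR rfl

end Overlay

end ImpTerrain

theorem stmt0_general {V : Type} [Fintype V] [DecidableEq V] (T : ImpTerrain V)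
    {ι : Type} [Fintype ι] (R : ι → V → ℝ) (hR : ∀ i, T.IsRealization (R i))
    (q : ι → V) (Rbar : V → ℝ)
    (hhigh : ∀ v, v ∉ (⋃ i, T.WS (R i) {q i}) → Rbar v = T.high v)
    (hmin : ∀ v, v ∈ (⋃ i, T.WS (R i) {q i}) →
      Rbar v = sInf ((fun i => R i v) '' {i | v ∈ T.WS (R i) {q i}}))
    (i : ι) :
    T.WS (R i) {q i} ⊆ T.WS Rbar (Set.range q) := by
  have hle : ∀ j, ∀ v ∈ T.WS (R j) {q j}, Rbar v ≤ R j v := fun j v hv => by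
    rw [hmin v (mem_iUnion.2 ⟨j, hv⟩)]
    exact csInf_le (Set.toFinite _).bddBelow ⟨j, hv, rfl⟩
  have hoff : ∀ j, ∀ v ∉ ⋃ i, T.WS (R i) {q i}, R j v ≤ Rbar v := fun j v hv =>
    hhigh v hv ▸ (hR j v).2
  have hattain :
      ∀ v ∈ ⋃ i, T.WS (R i) {q i}, ∃ j, v ∈ T.WS (R j) {q j} ∧ Rbar v = R j v := by
    intro v hv
    have hne : ((fun j => R j v) '' {j | v ∈ T.WS (R j) {q j}}).Nonempty :=
      Nonempty.image _ (mem_iUnion.1 hv)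
    have hmem := hne.csInf_mem (toFinite _)
    rw [← hmin v hv] at hmem
    obtain ⟨j, hj, hjv⟩ := hmem
    exact ⟨j, hj, hjv.symm⟩
  intro p hp
  obtain ⟨m, hm⟩ := T.exists_flowsTo_of_mem_iUnion hle hoff hattain (mem_iUnion.2 ⟨i, hp⟩)
  exact ⟨q m, mem_range_self m, hm⟩

/-- Watershed-overlay lemma: if `Rbar` is the watershed-overlay of the
watersheds `WS(R i, q i)`, then each `WS(R i, q i)` is contained in
`WS(Rbar, Q)` where `Q = range q`. -/
theorem stmt0 {V : Type} [Fintype V] [DecidableEq V] (T : ImpTerrain V)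
    (hle : ∀ v, T.low v ≤ T.high v)
    {ι : Type} [Fintype ι] (R : ι → V → ℝ) (hR : ∀ i, T.IsRealization (R i))
    (q : ι → V) (Rbar : V → ℝ)
    (hhigh : ∀ v, v ∉ (⋃ i, T.WS (R i) {q i}) → Rbar v = T.high v)
    (hmin : ∀ v, v ∈ (⋃ i, T.WS (R i) {q i}) →
      Rbar v = sInf ((fun i => R i v) '' {i | v ∈ T.WS (R i) {q i}}))
    (i : ι) :
    T.WS (R i) {q i} ⊆ T.WS Rbar (Set.range q) :=
  stmt0_general T R hR q Rbar hhigh hmin i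
end

section
/- A set of nodes S in an imprecise terrain is an imprecise minimum if and only if (i) bar(S) := min_{s∈S} high(s) < min_{t∈N(S)} low(t), and (ii) no proper subset S' of S satisfies condition (i). -/
open scoped Classical
open Set

/-!
If some `s ∈ S` has `high s` below the `low` of every neighbour of `S`, then in any realization
the plateau through a lowest node of `S`, taken inside `S`, is a local minimum: its neighbours in
`S` are higher by construction, and those outside `S` lie above `high s`. Conversely, raise every
node `x` to the least level `c` at which water from `x` can leave `S` through nodes with
`low ≤ c`, capped at `high x`. A local minimum inside `S` cannot escape at its own level, so its
nodes sit at their `high`, and the component, at that level, of the nodes of `S` that cannot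
escape satisfies (i). Thus the sets satisfying (i) and the sets containing a local minimum in every
realization have the same minimal elements.
-/

namespace ImpTerrain

variable {V : Type} [Fintype V] [DecidableEq V] (T : ImpTerrain V)

section Components

variable {T} {D D' : Set V} {u v : V}

theorem ConnIn.symm (h : T.ConnIn D u v) : T.ConnIn D v u := by
  induction h with
  | refl => exact Relation.ReflTransGen.refl
  | tail _ hab ih => exact Relation.ReflTransGen.head ⟨T.adj_symm _ _ hab.1, hab.2.2, hab.2.1⟩ ih

theorem ConnIn.mono (hDD' : D ⊆ D') (h : T.ConnIn D u v) : T.ConnIn D' u v :=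
  Relation.ReflTransGen.mono (fun _ _ hab => ⟨hab.1, hDD' hab.2.1, hDD' hab.2.2⟩) _ _ h

theorem ConnIn.mem_of_mem_left (h : T.ConnIn D u v) (hu : u ∈ D) : v ∈ D := by
  rcases h.cases_tail with rfl | ⟨_, _, hab⟩
  exacts [hu, hab.2.2]

theorem ConnIn.mem_of_mem_right (h : T.ConnIn D u v) (hv : v ∈ D) : u ∈ D :=
  h.symm.mem_of_mem_left hv

variable (T) in
def component (D : Set V) (u : V) : Set V := {x | T.ConnIn D u x}

theorem mem_component_self : u ∈ T.component D u := Relation.ReflTransGen.refl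

theorem component_subset (hu : u ∈ D) : T.component D u ⊆ D := fun _ hx => hx.mem_of_mem_left hu

theorem connIn_component {a b : V} (ha : a ∈ T.component D u)
    (hb : b ∈ T.component D u) : T.ConnIn (T.component D u) a b := by
  have from_u : ∀ x, T.ConnIn D u x → T.ConnIn (T.component D u) u x := by
    intro x hx
    induction hx with
    | refl => exact Relation.ReflTransGen.refl
    | tail hua hab ih => exact ih.tail ⟨hab.1, hua, hua.tail hab⟩
  exact (from_u a ha).symm.trans (from_u b hb)

theorem notMem_of_mem_nbhd_component (hu : u ∈ D) {t : V} (ht : t ∈ T.Nbhd (T.component D u)) :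
    t ∉ D := by
  obtain ⟨htK, w, hwK, htw⟩ := ht
  exact fun htD => htK (hwK.tail ⟨T.adj_symm _ _ htw, component_subset hu hwK, htD⟩)

end Components

def HighBelowNbhd (S : Set V) : Prop :=
  ∃ s ∈ S, ∀ t ∈ T.Nbhd S, T.high s < T.low t

theorem alwaysMin_of_highBelowNbhd {S : Set V} (hS : T.HighBelowNbhd S) : T.AlwaysMin S := by
  obtain ⟨s, hs, hs_below⟩ := hS
  intro R hR
  obtain ⟨u, hu, hu_min⟩ := Set.exists_min_image S R S.toFinite ⟨s, hs⟩
  set D : Set V := {x | x ∈ S ∧ R x = R u}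
  have huD : u ∈ D := ⟨hu, rfl⟩
  have hPS : T.component D u ⊆ S := fun x hx => (component_subset huD hx).1
  refine ⟨T.component D u, ⟨⟨u, mem_component_self⟩, fun a ha b hb => connIn_component ha hb,
    fun a ha b hb => (component_subset huD ha).2.trans (component_subset huD hb).2.symm,
    fun a ha t ht => ?_⟩, hPS⟩
  rw [(component_subset huD ha).2]
  by_cases htS : t ∈ S
  · exact (hu_min t htS).lt_of_ne fun h => notMem_of_mem_nbhd_component huD ht ⟨htS, h.symm⟩
  · obtain ⟨-, w, hw, htw⟩ := ht
    calc R u ≤ R s := hu_min s hs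
      _ ≤ T.high s := (hR s).2
      _ < T.low t := hs_below t ⟨htS, w, hPS hw, htw⟩
      _ ≤ R t := (hR t).1

/-- Water at `x` can leave `S` at level `c`. -/
def Escapes (S : Set V) (c : ℝ) (x : V) : Prop :=
  ∃ t ∉ S, T.low t ≤ c ∧ T.ConnIn {y | T.low y ≤ c} x t

section Escapes

variable {T} {S : Set V} {c : ℝ} {x y : V}

theorem escapes_of_notMem (hx : x ∉ S) (hc : T.low x ≤ c) : T.Escapes S c x :=
  ⟨x, hx, hc, Relation.ReflTransGen.refl⟩

theorem Escapes.low_le (h : T.Escapes S c x) : T.low x ≤ c := by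
  obtain ⟨t, -, ht, hxt⟩ := h
  exact hxt.mem_of_mem_right (D := {y | T.low y ≤ c}) ht

theorem Escapes.mono {c' : ℝ} (hcc' : c ≤ c') (h : T.Escapes S c x) : T.Escapes S c' x := by
  obtain ⟨t, htS, ht, hxt⟩ := h
  exact ⟨t, htS, ht.trans hcc', hxt.mono fun y hy => le_trans hy hcc'⟩

theorem Escapes.of_adj (hx : T.low x ≤ c) (hxy : T.adj x y) (h : T.Escapes S c y) :
    T.Escapes S c x :=
  let ⟨t, htS, ht, hyt⟩ := h
  ⟨t, htS, ht, hyt.head ⟨hxy, hx, h.low_le⟩⟩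

theorem Escapes.exists_low (h : T.Escapes S c x) :
    ∃ v, T.low v ≤ c ∧ T.Escapes S (T.low v) x := by
  obtain ⟨t, htS, ht, hxt⟩ := h
  induction hxt using Relation.ReflTransGen.head_induction_on with
  | refl => exact ⟨t, ht, escapes_of_notMem htS le_rfl⟩
  | head hab _ ih =>
    obtain ⟨v, hv, hv_esc⟩ := ih
    rcases le_total (T.low _) (T.low v) with hav | hva
    · exact ⟨v, hv, hv_esc.of_adj hav hab.1⟩
    · exact ⟨_, hab.2.1, (hv_esc.mono hva).of_adj le_rfl hab.1⟩

end Escapes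

def escapeLevels (S : Set V) (x : V) : Set ℝ :=
  insert (T.high x) (T.low '' {v | T.Escapes S (T.low v) x})

theorem finite_escapeLevels (S : Set V) (x : V) : (T.escapeLevels S x).Finite :=
  ((Set.toFinite _).image _).insert _

/-- Every node is raised to its least escape level from `S`, capped at its `high`. -/
noncomputable def escapeRealization (S : Set V) (x : V) : ℝ :=
  sInf (T.escapeLevels S x)

section escapeRealization

variable {T} {S : Set V} {c : ℝ} {x : V}

theorem bddBelow_escapeLevels : BddBelow (T.escapeLevels S x) :=
  (T.finite_escapeLevels S x).bddBelow

theorem isRealization_escapeRealization (hle : ∀ v, T.low v ≤ T.high v) (S : Set V) :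
    T.IsRealization (T.escapeRealization S) := fun x =>
  ⟨le_csInf (Set.insert_nonempty _ _) <| by
      simpa only [escapeLevels, Set.forall_mem_insert, Set.forall_mem_image] using
        ⟨hle x, fun _ hv => Escapes.low_le hv⟩,
    csInf_le bddBelow_escapeLevels (Set.mem_insert _ _)⟩

theorem Escapes.escapeRealization_le (h : T.Escapes S c x) : T.escapeRealization S x ≤ c := by
  obtain ⟨v, hv, hv_esc⟩ := h.exists_low
  exact (csInf_le bddBelow_escapeLevels (Set.mem_insert_of_mem _ ⟨v, hv_esc, rfl⟩)).trans hv

theorem escapeRealization_eq_high_or_escapes :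
    T.escapeRealization S x = T.high x ∨ T.Escapes S (T.escapeRealization S x) x := by
  rcases (Set.insert_nonempty _ _).csInf_mem (T.finite_escapeLevels S x) with h | ⟨v, hv, h⟩
  · exact Or.inl h
  · rw [escapeRealization, escapeLevels, ← h]
    exact Or.inr hv

/-- A local minimum inside `S` cannot escape at its own level: the first node off the escape
route would be a neighbour of it that is not higher. -/
theorem LocalMin.not_escapes {P : Set V} (hP : T.LocalMin (T.escapeRealization S) P)
    (hPS : P ⊆ S) (hx : x ∈ P) : ¬ T.Escapes S (T.escapeRealization S x) x := by
  obtain ⟨-, -, hP_level, hP_below⟩ := hP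
  rintro ⟨t, htS, ht, hxt⟩
  suffices ∀ y, T.ConnIn {y | T.low y ≤ T.escapeRealization S x} y t → y ∈ P → t ∈ P from
    htS (hPS (this x hxt hx))
  intro y hyt
  induction hyt using Relation.ReflTransGen.head_induction_on with
  | refl => exact id
  | @head y b hyb hbt ih =>
    refine fun hy => ih (by_contra fun hb => ?_)
    have hb_above := hP_below y hy b ⟨hb, y, hy, T.adj_symm _ _ hyb.1⟩
    rw [hP_level y hy x hx] at hb_above
    exact hb_above.not_ge (Escapes.escapeRealization_le ⟨t, htS, ht, hbt⟩)

end escapeRealization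

theorem exists_subset_highBelowNbhd_of_alwaysMin (hle : ∀ v, T.low v ≤ T.high v) {S : Set V}
    (hS : T.AlwaysMin S) : ∃ S' ⊆ S, T.HighBelowNbhd S' := by
  set R := T.escapeRealization S
  have hR := isRealization_escapeRealization hle S
  obtain ⟨P, hP, hPS⟩ := hS R hR
  obtain ⟨u, hu⟩ := hP.1
  have hP_stuck : ∀ x ∈ P, ¬ T.Escapes S (R u) x := fun x hx =>
    hP.2.2.1 x hx u hu ▸ hP.not_escapes hPS hx
  have hu_high : T.high u = R u :=
    (escapeRealization_eq_high_or_escapes.resolve_right (hP_stuck u hu)).symm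
  set D : Set V := {x | x ∈ S ∧ T.low x ≤ R u ∧ ¬ T.Escapes S (R u) x}
  have huD : u ∈ D := ⟨hPS hu, (hR u).1, hP_stuck u hu⟩
  refine ⟨T.component D u, fun x hx => (component_subset huD hx).1, u, mem_component_self,
    fun t ht => ?_⟩
  rw [hu_high]
  by_contra! ht_low
  have ht_esc : T.Escapes S (R u) t := by
    by_cases htS : t ∈ S
    · by_contra ht_stuck
      exact notMem_of_mem_nbhd_component huD ht ⟨htS, ht_low, ht_stuck⟩
    · exact escapes_of_notMem htS ht_low
  obtain ⟨-, w, hw, htw⟩ := ht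
  obtain ⟨-, hw_low, hw_stuck⟩ := component_subset huD hw
  exact hw_stuck (ht_esc.of_adj hw_low (T.adj_symm _ _ htw))

end ImpTerrain

/-- Characterization of imprecise minima: `S` is an imprecise minimum iff
(i) `bar(S) = min_{s∈S} high s < min_{t∈N(S)} low t` and (ii) no proper subset
of `S` satisfies (i). -/
theorem stmt2 {V : Type} [Fintype V] [DecidableEq V] (T : ImpTerrain V)
    (hle : ∀ v, T.low v ≤ T.high v) (S : Set V) :
    T.ImpreciseMin S ↔
      ((∃ s ∈ S, ∀ t ∈ T.Nbhd S, T.high s < T.low t) ∧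
        ∀ S', S' ⊂ S → ¬ ∃ s ∈ S', ∀ t ∈ T.Nbhd S', T.high s < T.low t) :=
  Set.minimal_iff_forall_ssubset.symm.trans <|
    (minimal_iff_minimal_of_imp_of_forall (fun _ => T.alwaysMin_of_highBelowNbhd)
      (fun _ => T.exists_subset_highBelowNbhd_of_alwaysMin hle)).trans
      Set.minimal_iff_forall_ssubset
end

section
/- On a regular imprecise terrain, every node s of an imprecise minimum S has the same lower elevation bound low(s); moreover, for every nonempty subset S' ⊆ S, PoWS(S') = PoWS(S) and WS(R⁻, S') = WS(R⁻, S), where R⁻ is the lowermost realization. -/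
open scoped Classical
open Set

/-!
Let `S` be an imprecise minimum of a regular terrain. The lowermost realization has a local
minimum inside `S`, which by regularity is itself an imprecise minimum, so by minimality it is
all of `S`. Hence `low` is constant on `S`, and any two nonempty subsets of `S` have the same
watershed in any realization where `S` is a local minimum, since water entering `S` can wander
through all of it.

For the potential watershed, if water flows from `p` into `S` in a realization `R`, it still does
so after lowering `R` to `low` on `S`: slopes towards `S` only get steeper and no new local
minimum appears away from `S`. In the lowered realization `S` is a local minimum, so `p` then
drains to every node of `S`.
-/

namespace ImpTerrain

variable {V : Type} [Fintype V] [DecidableEq V] {T : ImpTerrain V}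

section Realizations

lemma isRealization_low (hle : ∀ v, T.low v ≤ T.high v) : T.IsRealization T.low :=
  fun v => ⟨le_rfl, hle v⟩

lemma IsRealization.piecewise {R₁ R₂ : V → ℝ} (h₁ : T.IsRealization R₁)
    (h₂ : T.IsRealization R₂) (S : Set V) : T.IsRealization (S.piecewise R₁ R₂) := by
  intro v
  by_cases hv : v ∈ S
  · simpa only [Set.piecewise_eq_of_mem _ _ _ hv] using h₁ v
  · simpa only [Set.piecewise_eq_of_notMem _ _ _ hv] using h₂ v

end Realizations

section Slopes

variable {R R' : V → ℝ} {p q : V}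

lemma slope_nonneg (h : R q ≤ R p) : 0 ≤ T.slope R p q :=
  div_nonneg (sub_nonneg.2 h) dist_nonneg

lemma slope_nonpos (h : R p ≤ R q) : T.slope R p q ≤ 0 :=
  div_nonpos_of_nonpos_of_nonneg (sub_nonpos.2 h) dist_nonneg

lemma slope_le_slope_s4 (hp : R p = R' p) (hq : R' q ≤ R q) : T.slope R p q ≤ T.slope R' p q :=
  div_le_div_of_nonneg_right (by linarith) dist_nonneg

lemma slope_congr (hp : R' p = R p) (hq : R' q = R q) : T.slope R' p q = T.slope R p q := by
  simp only [slope, hp, hq]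

end Slopes

namespace LocalMin

variable {R : V → ℝ} {P : Set V}

lemma flowsTo_s4 (hP : T.LocalMin R P) {u v : V} (hu : u ∈ P) (hv : v ∈ P) : T.FlowsTo R u v :=
  Relation.ReflTransGen.mono (fun _ _ hab => Or.inl ⟨P, hP, hab.2.1, hab.2.2, hab.1⟩) _ _
    (hP.2.1 u hu v hv)

lemma le_of_adj (hP : T.LocalMin R P) {u r : V} (hu : u ∈ P) (hur : T.adj u r) : R u ≤ R r := by
  by_cases hr : r ∈ P
  · exact (hP.2.2.1 u hu r hr).le
  · exact (hP.2.2.2 u hu r ⟨hr, u, hu, T.adj_symm u r hur⟩).le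

lemma subset_of_mem (hP : T.LocalMin R P) {P' : Set V} (hP' : T.LocalMin R P') {x : V}
    (hx : x ∈ P) (hx' : x ∈ P') : P ⊆ P' := by
  intro y hy
  obtain hxy := hP.2.1 x hx y hy
  clear hy
  induction hxy with
  | refl => exact hx'
  | @tail b c _ hbc hb =>
    by_contra hc
    have hlt := hP'.2.2.2 b hb c ⟨hc, b, hb, T.adj_symm b c hbc.1⟩
    linarith [hP.2.2.1 b hbc.2.1 c hbc.2.2]

lemma eq_of_mem (hP : T.LocalMin R P) {P' : Set V} (hP' : T.LocalMin R P') {x : V}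
    (hx : x ∈ P) (hx' : x ∈ P') : P = P' :=
  (hP.subset_of_mem hP' hx hx').antisymm (hP'.subset_of_mem hP hx' hx)

lemma mem_of_flowsTo_s4 (hP : T.LocalMin R P) {a b : V} (ha : a ∈ P) (hab : T.FlowsTo R a b) :
    b ∈ P := by
  induction hab with
  | refl => exact ha
  | tail _ hstep hx =>
    rcases hstep with ⟨P', hP', hxP', hyP', -⟩ | ⟨hnot, -⟩
    · exact hP'.eq_of_mem hP hxP' hx ▸ hyP'
    · exact absurd ⟨P, hP, hx⟩ hnot

lemma of_le_of_eqOn {R' : V → ℝ} (hP : T.LocalMin R' P) (hle : R' ≤ R) (heq : EqOn R' R P) :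
    T.LocalMin R P := by
  refine ⟨hP.1, hP.2.1, fun u hu v hv => ?_, fun u hu t ht => ?_⟩
  · rw [← heq hu, ← heq hv]
    exact hP.2.2.1 u hu v hv
  · rw [← heq hu]
    exact (hP.2.2.2 u hu t ht).trans_le (hle t)

lemma piecewise {R₂ : V → ℝ} (hP : T.LocalMin R P) (hle : R ≤ R₂) :
    T.LocalMin (P.piecewise R R₂) P := by
  refine ⟨hP.1, hP.2.1, fun u hu v hv => ?_, fun u hu t ht => ?_⟩
  · simpa only [Set.piecewise_eq_of_mem _ _ _ hu, Set.piecewise_eq_of_mem _ _ _ hv]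
      using hP.2.2.1 u hu v hv
  · rw [Set.piecewise_eq_of_mem _ _ _ hu, Set.piecewise_eq_of_notMem _ _ _ ht.1]
    exact (hP.2.2.2 u hu t ht).trans_le (hle t)

end LocalMin

lemma ImpreciseMin.localMin_low {S : Set V} (hS : T.ImpreciseMin S)
    (hle : ∀ v, T.low v ≤ T.high v) (hreg : T.Regular) : T.LocalMin T.low S := by
  obtain ⟨P, hP, hPS⟩ := hS.1 T.low (isRealization_low hle)
  obtain rfl : P = S := by
    by_contra hne
    exact hS.2 P (hPS.ssubset_of_ne hne) (hreg P hP).1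
  exact hP

section Watershed

variable {R : V → ℝ}

lemma WS_mono {S S' : Set V} (h : S' ⊆ S) : T.WS R S' ⊆ T.WS R S :=
  fun _ ⟨q, hq, hpq⟩ => ⟨q, h hq, hpq⟩

lemma PoWS_mono {S S' : Set V} (h : S' ⊆ S) : T.PoWS S' ⊆ T.PoWS S :=
  fun _ ⟨R, hR, hp⟩ => ⟨R, hR, WS_mono h hp⟩

lemma LocalMin.WS_eq {S S' : Set V} (hS : T.LocalMin R S) (hS' : S' ⊆ S) (hne : S'.Nonempty) :
    T.WS R S' = T.WS R S := by
  refine (WS_mono hS').antisymm fun p ⟨q, hq, hpq⟩ => ?_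
  obtain ⟨s, hs⟩ := hne
  exact ⟨s, hs, hpq.trans (hS.flowsTo_s4 hq (hS' hs))⟩

/-- The steepest neighbour of `a` is either in `S` or as steep as `v`. -/
lemma mem_WS_of_steepest_outside {S : Set V} {a v : V} (hv : v ∈ T.WS R S) (hav : T.adj a v)
    (ha : ¬ T.InLocalMin R a) (hv₀ : 0 ≤ T.slope R a v)
    (hvmax : ∀ r, T.adj a r → r ∉ S → T.slope R a r ≤ T.slope R a v) : a ∈ T.WS R S := by
  obtain ⟨m, hm, hmax⟩ := (Finset.univ.filter (T.adj a)).exists_max_image (T.slope R a)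
    ⟨v, Finset.mem_filter.2 ⟨Finset.mem_univ v, hav⟩⟩
  have hsdn : ∀ t, T.adj a t → T.slope R a m ≤ T.slope R a t → 0 ≤ T.slope R a t →
      T.SDN R a t := fun t ht hmt ht₀ =>
    ⟨ht, ht₀, fun r hr => (hmax r (Finset.mem_filter.2 ⟨Finset.mem_univ r, hr⟩)).trans hmt⟩
  have ham : T.adj a m := (Finset.mem_filter.1 hm).2
  by_cases hmS : m ∈ S
  · have hvm := hmax v (Finset.mem_filter.2 ⟨Finset.mem_univ v, hav⟩)
    exact ⟨m, hmS, .single (Or.inr ⟨ha, hsdn m ham le_rfl (hv₀.trans hvm)⟩)⟩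
  · obtain ⟨q, hq, hvq⟩ := hv
    exact ⟨q, hq, .head (Or.inr ⟨ha, hsdn v hav (hvmax m ham hmS) hv₀⟩) hvq⟩

end Watershed

section Lowering

variable {R R' : V → ℝ} {S : Set V} (hle : R' ≤ R) (heq : EqOn R' R Sᶜ)
include hle heq

lemma mem_WS_or_localMin_of_inLocalMin {a : V} (ha : T.InLocalMin R' a) :
    a ∈ T.WS R' S ∨ ∃ P, T.LocalMin R P ∧ a ∈ P ∧ Disjoint P S := by
  obtain ⟨P, hP, haP⟩ := ha
  by_cases hPS : ∃ s ∈ P, s ∈ S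
  · obtain ⟨s, hsP, hsS⟩ := hPS
    exact .inl ⟨s, hsS, hP.flowsTo_s4 haP hsP⟩
  · have hdisj : Disjoint P S := Set.disjoint_left.2 fun s hsP hsS => hPS ⟨s, hsP, hsS⟩
    exact .inr ⟨P, hP.of_le_of_eqOn hle (heq.mono (Set.subset_compl_iff_disjoint_right.2 hdisj)),
      haP, hdisj⟩

/-- Along a path inside `P` towards `q`, each next node is a steepest neighbour in `R'`, as all
slopes to nodes outside `S` are nonpositive. -/
lemma LocalMin.subset_WS_of_le_of_eqOn {P : Set V} (hP : T.LocalMin R P) {q : V} (hqP : q ∈ P)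
    (hqS : q ∈ S) : P ⊆ T.WS R' S := by
  intro w hw
  induction hP.2.1 w hw q hqP using Relation.ReflTransGen.head_induction_on with
  | refl => exact ⟨q, hqS, .refl⟩
  | @head u v huv _ hv =>
    obtain ⟨hadj, hu, hvP⟩ := huv
    by_cases huS : u ∈ S
    · exact ⟨u, huS, .refl⟩
    by_cases hloc : T.InLocalMin R' u
    · refine (mem_WS_or_localMin_of_inLocalMin hle heq hloc).resolve_right ?_
      rintro ⟨P', hP', huP', hdisj⟩
      exact Set.disjoint_left.1 hdisj (hP.eq_of_mem hP' hu huP' ▸ hqP) hqS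
    have hRu : R' u = R u := heq huS
    have hvu : R' v ≤ R' u := by
      rw [hRu, hP.2.2.1 u hu v hvP]
      exact hle v
    refine mem_WS_of_steepest_outside (hv hvP) hadj hloc (slope_nonneg hvu) fun r hr hrS => ?_
    rw [slope_congr hRu (heq hrS)]
    exact (slope_nonpos (hP.le_of_adj hu hr)).trans (slope_nonneg hvu)

theorem WS_subset_WS_of_le_of_eqOn : T.WS R S ⊆ T.WS R' S := by
  rintro a ⟨q, hqS, haq⟩
  induction haq using Relation.ReflTransGen.head_induction_on with
  | refl => exact ⟨q, hqS, .refl⟩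
  | @head a c hac hcq hc =>
    rcases hac with ⟨P, hP, haP, hcP, -⟩ | ⟨hnot, hadj, hc₀, hcmax⟩
    · exact hP.subset_WS_of_le_of_eqOn hle heq (hP.mem_of_flowsTo_s4 hcP hcq) hqS haP
    by_cases haS : a ∈ S
    · exact ⟨a, haS, .refl⟩
    by_cases hloc : T.InLocalMin R' a
    · refine (mem_WS_or_localMin_of_inLocalMin hle heq hloc).resolve_right ?_
      rintro ⟨P, hP, haP, -⟩
      exact hnot ⟨P, hP, haP⟩
    have hRa : R a = R' a := (heq haS).symm
    have hslope : T.slope R a c ≤ T.slope R' a c := slope_le_slope_s4 hRa (hle c)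
    refine mem_WS_of_steepest_outside hc hadj hloc (hc₀.trans hslope) fun r hr hrS => ?_
    rw [slope_congr hRa.symm (heq hrS)]
    exact (hcmax r hr).trans hslope

end Lowering

end ImpTerrain

/-- On a regular terrain, all nodes of an imprecise minimum share the same
lower elevation bound, and every nonempty subset has the same potential
watershed and the same watershed in the lowermost realization. -/
theorem stmt4 {V : Type} [Fintype V] [DecidableEq V] (T : ImpTerrain V)
    (hle : ∀ v, T.low v ≤ T.high v) (hreg : T.Regular)
    (S : Set V) (hS : T.ImpreciseMin S) :
    (∀ s ∈ S, ∀ s' ∈ S, T.low s = T.low s') ∧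
      ∀ S' ⊆ S, S'.Nonempty →
        T.PoWS S' = T.PoWS S ∧ T.WS T.low S' = T.WS T.low S := by
  have hSlow : T.LocalMin T.low S := hS.localMin_low hle hreg
  refine ⟨hSlow.2.2.1, fun S' hS' hne => ⟨?_, hSlow.WS_eq hS' hne⟩⟩
  refine (ImpTerrain.PoWS_mono hS').antisymm ?_
  rintro p ⟨R, hR, hp⟩
  have hlowR : T.low ≤ R := fun v => (hR v).1
  refine ⟨S.piecewise T.low R, (ImpTerrain.isRealization_low hle).piecewise hR S, ?_⟩
  rw [(hSlow.piecewise hlowR).WS_eq hS' hne]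
  exact ImpTerrain.WS_subset_WS_of_le_of_eqOn
    (Set.piecewise_le (fun v _ => hlowR v) fun _ _ => le_rfl) (Set.piecewise_eqOn_compl ..) hp
end

section
/- In a realization where every neighbor q_i of a node p is at its maximal elevation high(q_i), the neighbor q_i (a vertex of the lower-left convex chain of p's slope diagram) is a steepest-descent neighbor of p if and only if the elevation of p lies in the open interval (z_i, z_{i−1}), where z_i is the elevation at which the line through the slope-diagram points of q_i and q_{i+1} intersects the vertical axis. -/
open scoped Classical
open Set

lemma keyIff1 (z h1 h2 d1 d2 : ℝ) (hd1 : 0 < d1) (h12 : d1 < d2) :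
    (z - h2) / d2 < (z - h1) / d1 ↔ h1 - d1 * ((h2 - h1) / (d2 - d1)) < z := by
  have hd2 : (0:ℝ) < d2 := hd1.trans h12
  have h21 : (0:ℝ) < d2 - d1 := by linarith
  rw [div_lt_div_iff₀ hd2 hd1,
    show h1 - d1 * ((h2 - h1) / (d2 - d1)) = (h1 * d2 - h2 * d1) / (d2 - d1) by
      field_simp; ring,
    div_lt_iff₀ h21]
  constructor <;> intro H <;> nlinarith

lemma keyIff2 (z h1 h2 d1 d2 : ℝ) (hd1 : 0 < d1) (h12 : d1 < d2) :
    (z - h1) / d1 < (z - h2) / d2 ↔ z < h1 - d1 * ((h2 - h1) / (d2 - d1)) := by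
  have hd2 : (0:ℝ) < d2 := hd1.trans h12
  have h21 : (0:ℝ) < d2 - d1 := by linarith
  rw [div_lt_div_iff₀ hd1 hd2,
    show h1 - d1 * ((h2 - h1) / (d2 - d1)) = (h1 * d2 - h2 * d1) / (d2 - d1) by
      field_simp; ring,
    lt_div_iff₀ h21]
  constructor <;> intro H <;> nlinarith

lemma Zdec (h1 h2 h3 d1 d2 d3 : ℝ) (hd2 : 0 < d2) (h12 : d1 < d2) (h23 : d2 < d3)
    (hc : (h2 - h1) / (d2 - d1) < (h3 - h2) / (d3 - d2)) :
    h2 - d2 * ((h3 - h2) / (d3 - d2)) < h1 - d1 * ((h2 - h1) / (d2 - d1)) := by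
  have e : h1 - d1 * ((h2 - h1) / (d2 - d1)) = h2 - d2 * ((h2 - h1) / (d2 - d1)) := by
    have : d2 - d1 ≠ 0 := by linarith
    field_simp
    ring
  rw [e]
  have := mul_lt_mul_of_pos_left hc hd2
  linarith

lemma aboveRight (z hr h1 s d1 dr : ℝ) (hd1 : 0 < d1) (hdr : 0 < dr)
    (hcase : d1 ≤ dr) (hZ : h1 - d1 * s < z) (hq : h1 + s * (dr - d1) < hr) :
    (z - hr) / dr < (z - h1) / d1 := by
  rw [div_lt_div_iff₀ hdr hd1]
  nlinarith [mul_nonneg (sub_nonneg.2 hcase) (sub_pos.2 hZ).le,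
    mul_lt_mul_of_pos_right hq hd1]

lemma aboveLeft (z hr h1 h2 s d1 d2 dr : ℝ) (hdr : 0 < dr) (hd2 : 0 < d2)
    (hcase : dr < d2) (hline : s * (d2 - d1) = h2 - h1)
    (hZ : z < h1 - d1 * s) (hq : h1 + s * (dr - d1) < hr) :
    (z - hr) / dr < (z - h2) / d2 := by
  rw [div_lt_div_iff₀ hdr hd2]
  have H3 : s * (d2 - d1) * dr = (h2 - h1) * dr := by rw [hline]
  nlinarith [mul_pos (sub_pos.2 hcase) (sub_pos.2 hZ),
    mul_lt_mul_of_pos_right hq hd2, H3]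

noncomputable def chainZ {V : Type} [Fintype V] [DecidableEq V] (T : ImpTerrain V)
    (p : V) (c : ℕ → V) (j : ℕ) : ℝ :=
  T.high (c j) -
    T.hdist p (c j) *
      ((T.high (c (j + 1)) - T.high (c j)) /
        (T.hdist p (c (j + 1)) - T.hdist p (c j)))

/-- Slope-diagram observation: let `c 0, ..., c (m-1)` be the neighbors of `p`
on the lower-left convex chain of `p`'s slope diagram (points
`(hdist p (c j), high (c j))`), listed with strictly increasing distance,
strictly decreasing height, and strictly increasing segment slopes, and let
every other neighbor lie strictly above every chain line. In a realization
where every neighbor of `p` is at its maximal elevation, the chain neighbor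
`c i` (for an interior index `i`) is the (unique) steepest-descent neighbor of
`p` if and only if the elevation `z` of `p` lies in the open interval
`(z_i, z_{i-1})`, where `z_j` is the intercept with the vertical axis of the
line through the diagram points of `c j` and `c (j+1)`. -/
theorem stmt14 {V : Type} [Fintype V] [DecidableEq V] (T : ImpTerrain V)
    (hle : ∀ v, T.low v ≤ T.high v)
    (p : V) (m : ℕ) (hm : 3 ≤ m) (c : ℕ → V)
    (hadj : ∀ j, j < m → T.adj p (c j))
    (hdmono : ∀ j k, j < k → k < m → T.hdist p (c j) < T.hdist p (c k))
    (hhmono : ∀ j k, j < k → k < m → T.high (c k) < T.high (c j))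
    (hconv : ∀ j, j + 2 < m →
      (T.high (c (j + 1)) - T.high (c j)) / (T.hdist p (c (j + 1)) - T.hdist p (c j)) <
        (T.high (c (j + 2)) - T.high (c (j + 1))) /
          (T.hdist p (c (j + 2)) - T.hdist p (c (j + 1))))
    (habove : ∀ q, T.adj p q → (∀ j, j < m → q ≠ c j) → ∀ j, j + 1 < m →
      T.high (c j) +
          (T.high (c (j + 1)) - T.high (c j)) /
              (T.hdist p (c (j + 1)) - T.hdist p (c j)) *
            (T.hdist p q - T.hdist p (c j)) <
        T.high q)
    (R : V → ℝ) (hR : T.IsRealization R)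
    (hnb : ∀ q, T.adj p q → R q = T.high q)
    (z : ℝ) (hz : R p = z)
    (i : ℕ) (hi1 : 1 ≤ i) (hi2 : i + 1 < m) :
    (T.SDN R p (c i) ∧ ∀ q, T.SDN R p q → q = c i) ↔
      z ∈ Set.Ioo
        (T.high (c i) -
          T.hdist p (c i) *
            ((T.high (c (i + 1)) - T.high (c i)) /
              (T.hdist p (c (i + 1)) - T.hdist p (c i))))
        (T.high (c (i - 1)) -
          T.hdist p (c (i - 1)) *
            ((T.high (c i) - T.high (c (i - 1))) /
              (T.hdist p (c i) - T.hdist p (c (i - 1))))) := by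
  obtain ⟨k, rfl⟩ : ∃ k, i = k + 1 := ⟨i - 1, by omega⟩
  simp only [Nat.add_sub_cancel]
  show _ ↔ z ∈ Set.Ioo (chainZ T p c (k + 1)) (chainZ T p c k)
  -- basic facts
  have hpne : ∀ q, T.adj p q → p ≠ q := fun q hq h => T.adj_irrefl p (by rwa [← h] at hq)
  have hdpos : ∀ q, T.adj p q → 0 < T.hdist p q := fun q hq =>
    dist_pos.2 (fun h => hpne q hq (T.posInj h))
  have hslp : ∀ q, T.adj p q → T.slope R p q = (z - T.high q) / T.hdist p q := by
    intro q hq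
    rw [ImpTerrain.slope, hz, hnb q hq]
  have hK1 : ∀ j, j + 1 < m →
      (T.slope R p (c (j + 1)) < T.slope R p (c j) ↔ chainZ T p c j < z) := by
    intro j hj
    rw [hslp (c (j + 1)) (hadj (j + 1) hj), hslp (c j) (hadj j (by omega))]
    exact keyIff1 z _ _ _ _ (hdpos _ (hadj _ (by omega))) (hdmono j (j + 1) (by omega) hj)
  have hK2 : ∀ j, j + 1 < m →
      (T.slope R p (c j) < T.slope R p (c (j + 1)) ↔ z < chainZ T p c j) := by
    intro j hj
    rw [hslp (c (j + 1)) (hadj (j + 1) hj), hslp (c j) (hadj j (by omega))]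
    exact keyIff2 z _ _ _ _ (hdpos _ (hadj _ (by omega))) (hdmono j (j + 1) (by omega) hj)
  have hZstep : ∀ j, j + 2 < m → chainZ T p c (j + 1) < chainZ T p c j := by
    intro j hj
    exact Zdec _ _ _ _ _ _ (hdpos _ (hadj _ (by omega)))
      (hdmono j (j + 1) (by omega) (by omega))
      (hdmono (j + 1) (j + 2) (by omega) hj) (hconv j hj)
  have hZmono : ∀ a b, a ≤ b → b + 1 < m → chainZ T p c b ≤ chainZ T p c a := by
    intro a b hab
    induction hab with
    | refl => intro _; exact le_refl _
    | @step n h ih =>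
      intro hn
      exact (hZstep n (by omega)).le.trans (ih (by omega))
  constructor
  · rintro ⟨⟨hadjI, hnn, hmaxI⟩, hU⟩
    have h1 : T.slope R p (c (k + 1 + 1)) < T.slope R p (c (k + 1)) := by
      rcases lt_or_eq_of_le (hmaxI _ (hadj _ hi2)) with h | h
      · exact h
      · exfalso
        have hc2 : c (k + 1 + 1) = c (k + 1) :=
          hU _ ⟨hadj _ hi2, by rw [h]; exact hnn, fun r hr => (hmaxI r hr).trans h.symm.le⟩
        have := hdmono (k + 1) (k + 1 + 1) (by omega) hi2
        rw [hc2] at this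
        exact lt_irrefl _ this
    have h2 : T.slope R p (c k) < T.slope R p (c (k + 1)) := by
      rcases lt_or_eq_of_le (hmaxI (c k) (hadj k (by omega))) with h | h
      · exact h
      · exfalso
        have hc2 : c k = c (k + 1) :=
          hU _ ⟨hadj k (by omega), by rw [h]; exact hnn,
            fun r hr => (hmaxI r hr).trans h.symm.le⟩
        have := hdmono k (k + 1) (by omega) (by omega)
        rw [hc2] at this
        exact lt_irrefl _ this
    exact ⟨(hK1 (k + 1) hi2).1 h1, (hK2 k (by omega)).1 h2⟩
  · rintro ⟨hlo, hhi⟩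
    have hasc : ∀ jj, jj < k + 1 → T.slope R p (c jj) < T.slope R p (c (jj + 1)) := by
      intro jj hjj
      exact (hK2 jj (by omega)).2 (hhi.trans_le (hZmono jj k (by omega) (by omega)))
    have hdesc : ∀ jj, k + 1 ≤ jj → jj + 1 < m →
        T.slope R p (c (jj + 1)) < T.slope R p (c jj) := by
      intro jj hjj hjm
      exact (hK1 jj hjm).2 (lt_of_le_of_lt (hZmono (k + 1) jj hjj hjm) hlo)
    have hltL : ∀ jj, jj < k + 1 → T.slope R p (c jj) < T.slope R p (c (k + 1)) := by
      have key : ∀ t, ∀ jj, k + 1 = jj + t → jj < k + 1 →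
          T.slope R p (c jj) < T.slope R p (c (k + 1)) := by
        intro t
        induction t with
        | zero => intro jj heq hlt; omega
        | succ t ih =>
          intro jj heq hlt
          have h1 := hasc jj hlt
          rcases (show jj + 1 = k + 1 ∨ jj + 1 < k + 1 by omega) with h | h
          · rwa [h] at h1
          · exact h1.trans (ih (jj + 1) (by omega) h)
      intro jj hjj; exact key (k + 1 - jj) jj (by omega) hjj
    have hltR : ∀ jj, k + 1 < jj → jj < m →
        T.slope R p (c jj) < T.slope R p (c (k + 1)) := by
      have key : ∀ t, ∀ jj, jj = k + 1 + t + 1 → jj < m →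
          T.slope R p (c jj) < T.slope R p (c (k + 1)) := by
        intro t
        induction t with
        | zero =>
          intro jj heq hjm
          subst heq
          exact hdesc (k + 1) (le_refl _) hjm
        | succ t ih =>
          intro jj heq hjm
          subst heq
          exact (hdesc (k + 1 + t + 1) (by omega) hjm).trans
            (ih (k + 1 + t + 1) (by omega) (by omega))
      intro jj hjj hjm; exact key (jj - k - 2) jj (by omega) hjm
    have hsneg : (T.high (c (k + 1 + 1)) - T.high (c (k + 1))) /
        (T.hdist p (c (k + 1 + 1)) - T.hdist p (c (k + 1))) < 0 :=
      div_neg_of_neg_of_pos (sub_neg.2 (hhmono (k + 1) (k + 1 + 1) (by omega) hi2))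
        (sub_pos.2 (hdmono (k + 1) (k + 1 + 1) (by omega) hi2))
    have hpos : 0 < T.slope R p (c (k + 1)) := by
      rw [hslp (c (k + 1)) (hadj (k + 1) (by omega))]
      apply div_pos _ (hdpos (c (k + 1)) (hadj (k + 1) (by omega)))
      have hds : T.hdist p (c (k + 1)) *
          ((T.high (c (k + 1 + 1)) - T.high (c (k + 1))) /
            (T.hdist p (c (k + 1 + 1)) - T.hdist p (c (k + 1)))) < 0 :=
        mul_neg_of_pos_of_neg (hdpos (c (k + 1)) (hadj (k + 1) (by omega))) hsneg
      have := hlo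
      rw [chainZ] at this
      linarith
    have hstrict : ∀ r, T.adj p r → r ≠ c (k + 1) →
        T.slope R p r < T.slope R p (c (k + 1)) := by
      intro r hr hner
      by_cases hch : ∃ j, j < m ∧ r = c j
      · obtain ⟨j, hjm, rfl⟩ := hch
        rcases lt_trichotomy j (k + 1) with h | h | h
        · exact hltL j h
        · exact absurd (by rw [h]) hner
        · exact hltR j h hjm
      · have hnc : ∀ j, j < m → r ≠ c j := fun j hj he => hch ⟨j, hj, he⟩
        rcases le_or_gt (T.hdist p (c (k + 1))) (T.hdist p r) with hcase | hcase
        · rw [hslp r hr, hslp (c (k + 1)) (hadj (k + 1) (by omega))]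
          refine aboveRight z (T.high r) (T.high (c (k + 1)))
            ((T.high (c (k + 1 + 1)) - T.high (c (k + 1))) /
              (T.hdist p (c (k + 1 + 1)) - T.hdist p (c (k + 1))))
            (T.hdist p (c (k + 1))) (T.hdist p r)
            (hdpos (c (k + 1)) (hadj (k + 1) (by omega))) (hdpos r hr) hcase ?_ ?_
          · have := hlo; rw [chainZ] at this; exact this
          · exact habove r hr hnc (k + 1) hi2
        · rw [hslp r hr, hslp (c (k + 1)) (hadj (k + 1) (by omega))]
          refine aboveLeft z (T.high r) (T.high (c k)) (T.high (c (k + 1)))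
            ((T.high (c (k + 1)) - T.high (c k)) /
              (T.hdist p (c (k + 1)) - T.hdist p (c k)))
            (T.hdist p (c k)) (T.hdist p (c (k + 1))) (T.hdist p r)
            (hdpos r hr) (hdpos (c (k + 1)) (hadj (k + 1) (by omega))) hcase ?_ ?_ ?_
          · exact div_mul_cancel₀ _
              (ne_of_gt (sub_pos.2 (hdmono k (k + 1) (by omega) (by omega))))
          · have := hhi; rw [chainZ] at this; exact this
          · exact habove r hr hnc k (by omega)
    have hmax : ∀ r, T.adj p r → T.slope R p r ≤ T.slope R p (c (k + 1)) := by
      intro r hr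
      by_cases h : r = c (k + 1)
      · rw [h]
      · exact (hstrict r hr h).le
    refine ⟨⟨hadj (k + 1) (by omega), hpos.le, hmax⟩, ?_⟩
    rintro q ⟨hqa, hq0, hqm⟩
    by_contra hne
    exact absurd (hqm (c (k + 1)) (hadj (k + 1) (by omega))) (not_le.2 (hstrict q hqa hne))
end
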